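/- Let X_n be a random walk with i.i.d. symmetric steps (ξ₁ has the same distribution as −ξ₁), N a positive integer, M_n the running maximum, and f : [0,∞) → ℝ nonincreasing and convex. Then any stopping time τ ≤ N satisfying P(X_τ = M_τ or τ = N) = 1 attains the supremum sup_{τ ≤ N} E[f(M_N − X_τ)]. -/

import Mathlib

/-!
Fix a time `j ≤ N` and reflect the walk after `j`: negate the steps taken after `j` and reverse
their order. For i.i.d. symmetric steps this preserves the law of the walk, and it fixes every
event of `ℱ_j`. Writing `d = M_j - X_j`, `m = max_{j ≤ l ≤ N} X_l - X_j` and `s = X_N - X_j`,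
the values of `M_N - X_j` and `M_N - X_N` are `max d m` and `max d m - s` on the path, and
`max d (m - s)` and `max d (m - s) + s` on its reflection. Both pairs have the same sum and the
first pair lies between the entries of the second, so by convexity of `f`, on every `ℱ_j`-event
continuing to `N` does at least as well as stopping at `j`, with equality where `X_j = M_j`.
Summing over the events `{σ = j}` gives `E f(M_N - X_σ) ≤ E f(M_N - X_N) = E f(M_N - X_τ)`.
-/

open Finset MeasureTheory ProbabilityTheory

open scoped ENNReal

theorem ConvexOn.map_add_le_of_mem_uIcc {𝕜 β : Type*} [Field 𝕜] [LinearOrder 𝕜]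
    [IsStrictOrderedRing 𝕜] [AddCommGroup β] [PartialOrder β] [IsOrderedAddMonoid β]
    [Module 𝕜 β] {s : Set 𝕜} {f : 𝕜 → β} (hf : ConvexOn 𝕜 s f) {a b x y : 𝕜}
    (ha : a ∈ s) (hb : b ∈ s) (hx : x ∈ Set.uIcc a b) (hxy : x + y = a + b) :
    f x + f y ≤ f a + f b := by
  rw [← segment_eq_uIcc] at hx
  obtain ⟨θ, φ, hθ, hφ, hθφ, rfl⟩ := hx
  have hy : y = φ • a + θ • b := by
    simp only [smul_eq_mul] at hxy ⊢
    linear_combination hxy - (a + b) * hθφ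
  calc f (θ • a + φ • b) + f y
      ≤ (θ • f a + φ • f b) + (φ • f a + θ • f b) := by
        rw [hy]
        exact add_le_add (hf.2 ha hb hθ hφ hθφ) (hf.2 ha hb hφ hθ (by rwa [add_comm]))
    _ = f a + f b := by
        rw [add_add_add_comm, ← add_smul, ← add_smul, add_comm φ, hθφ, one_smul, one_smul]

theorem ConvexOn.map_max_add_map_max_le {f : ℝ → ℝ} (hf : ConvexOn ℝ (Set.Ici 0) f)
    {d m s : ℝ} (hm : 0 ≤ m) (hs : s ≤ m) :
    f (max d m) + f (max d (m - s)) ≤ f (max d m - s) + f (max d (m - s) + s) := by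
  refine hf.map_add_le_of_mem_uIcc ?_ ?_ ?_ (by ring)
  · simp only [Set.mem_Ici]; linarith [le_max_right d m]
  · simp only [Set.mem_Ici]; linarith [le_max_right d (m - s)]
  · rw [Set.mem_uIcc]
    rcases le_total 0 s with hs0 | hs0
    · left; constructor
      · linarith
      · exact max_le (by linarith [le_max_left d (m - s)]) (by linarith [le_max_right d (m - s)])
    · right; constructor
      · rcases max_cases d (m - s) with ⟨h, -⟩ | ⟨h, -⟩ <;> rw [h] <;>
          linarith [le_max_left d m, le_max_right d m]
      · linarith

theorem ENNReal.ofReal_sub_add_ofReal_sub_le {c p q r s : ℝ} (hp : p ≤ c) (hq : q ≤ c)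
    (h : r + s ≤ p + q) :
    ENNReal.ofReal (c - p) + ENNReal.ofReal (c - q) ≤
      ENNReal.ofReal (c - r) + ENNReal.ofReal (c - s) := by
  rw [← ENNReal.ofReal_add (sub_nonneg.2 hp) (sub_nonneg.2 hq)]
  exact (ENNReal.ofReal_le_ofReal (by linarith)).trans ENNReal.ofReal_add_le

theorem AntitoneOn.measurable_comp_of_nonneg {α : Type*} [MeasurableSpace α] {f : ℝ → ℝ}
    (hf : AntitoneOn f (Set.Ici 0)) {g : α → ℝ} (hg : Measurable g) (hg₀ : ∀ a, 0 ≤ g a) :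
    Measurable fun a => f (g a) := by
  have hF : Antitone fun t => f (max t 0) := fun a b hab =>
    hf (le_max_right a 0) (le_max_right b 0) (max_le_max hab le_rfl)
  convert hF.measurable.comp hg with a
  rw [Function.comp_apply, max_eq_left (hg₀ a)]

theorem lintegral_le_of_ae_add_comp_le {α : Type*} [MeasurableSpace α] {μ : Measure α}
    {T : α → α} (hT : MeasurePreserving T μ μ) {u v : α → ℝ≥0∞} (hu : Measurable u)
    (hv : Measurable v) (h : ∀ᵐ x ∂μ, u x + u (T x) ≤ v x + v (T x)) :
    ∫⁻ x, u x ∂μ ≤ ∫⁻ x, v x ∂μ := by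
  have hsym : ∀ w : α → ℝ≥0∞, Measurable w → ∫⁻ x, w x + w (T x) ∂μ = 2 * ∫⁻ x, w x ∂μ :=
    fun w hw => by rw [lintegral_add_left hw, hT.lintegral_comp hw, two_mul]
  rw [← ENNReal.mul_le_mul_iff_right two_ne_zero ENNReal.ofNat_ne_top, ← hsym u hu, ← hsym v hv]
  exact lintegral_mono_ae h

theorem lintegral_comp_eq_sum_setLIntegral {Ω : Type*} [MeasurableSpace Ω] {P : Measure Ω}
    {ρ : Ω → ℕ} {N : ℕ} (hρ : ∀ j ≤ N, MeasurableSet {ω | ρ ω = j}) (hρN : ∀ ω, ρ ω ≤ N)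
    (F : ℕ → Ω → ℝ≥0∞) :
    ∫⁻ ω, F (ρ ω) ω ∂P = ∑ j ∈ range (N + 1), ∫⁻ ω in {ω | ρ ω = j}, F j ω ∂P := by
  have hcover : ⋃ j ∈ range (N + 1), {ω | ρ ω = j} = Set.univ :=
    Set.eq_univ_of_forall fun ω => Set.mem_biUnion (mem_range.2 (Nat.lt_succ_of_le (hρN ω))) rfl
  rw [← setLIntegral_univ, ← hcover, lintegral_biUnion_finset
    (fun i _ j _ hij => Set.disjoint_left.2 fun ω hi hj => hij (hi.symm.trans hj))
    (fun j hj => hρ j (Nat.le_of_lt_succ (mem_range.1 hj)))]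
  exact sum_congr rfl fun j hj =>
    setLIntegral_congr_fun (hρ j (Nat.le_of_lt_succ (mem_range.1 hj))) fun ω hω => by rw [hω]

theorem lintegral_comp_le_lintegral_comp_of_setLIntegral_le {Ω : Type*} [MeasurableSpace Ω]
    {P : Measure Ω} {ρ : Ω → ℕ} {N : ℕ} (hρ : ∀ j ≤ N, MeasurableSet {ω | ρ ω = j})
    (hρN : ∀ ω, ρ ω ≤ N) {F G : ℕ → Ω → ℝ≥0∞}
    (h : ∀ j ≤ N, ∫⁻ ω in {ω | ρ ω = j}, F j ω ∂P ≤ ∫⁻ ω in {ω | ρ ω = j}, G j ω ∂P) :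
    ∫⁻ ω, F (ρ ω) ω ∂P ≤ ∫⁻ ω, G (ρ ω) ω ∂P := by
  rw [lintegral_comp_eq_sum_setLIntegral hρ hρN F, lintegral_comp_eq_sum_setLIntegral hρ hρN G]
  exact sum_le_sum fun j hj => h j (Nat.le_of_lt_succ (mem_range.1 hj))

namespace RandomWalk

variable {N : ℕ}

def partialSum (x : Fin N → ℝ) (k : ℕ) : ℝ := ∑ i : Fin N, if (i : ℕ) < k then x i else 0

noncomputable def runningMax (x : Fin N → ℝ) (k : ℕ) : ℝ := ⨆ l : Fin (k + 1), partialSum x l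

noncomputable def tailMax (x : Fin N → ℝ) (j : ℕ) : ℝ := ⨆ l : Fin (N - j + 1), partialSum x (j + l)

def reflectIndex (j : ℕ) (i : Fin N) : Fin N :=
  if h : (i : ℕ) < j then i else ⟨j + N - 1 - i, by omega⟩

theorem reflectIndex_involutive (j : ℕ) : Function.Involutive (reflectIndex (N := N) j) := by
  intro i
  unfold reflectIndex
  split_ifs <;> ext <;> simp_all <;> omega

theorem coe_reflectIndex (j : ℕ) (i : Fin N) :
    (reflectIndex j i : ℕ) = if (i : ℕ) < j then (i : ℕ) else j + N - 1 - i := by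
  unfold reflectIndex; split_ifs <;> rfl

/-- Negates the increments after time `j` and reverses their order, so that the path after `j` is
run backwards from its endpoint (`partialSum_reflect_of_ge`). -/
def reflect (j : ℕ) (x : Fin N → ℝ) (i : Fin N) : ℝ :=
  if (i : ℕ) < j then x i else -x (reflectIndex j i)

def truncate (j : ℕ) (x : Fin N → ℝ) (i : Fin N) : ℝ := if (i : ℕ) < j then x i else 0

theorem truncate_reflect (j : ℕ) (x : Fin N → ℝ) : truncate j (reflect j x) = truncate j x := by
  ext i; unfold truncate reflect; split_ifs <;> rfl

theorem partialSum_truncate {j k : ℕ} (hk : k ≤ j) (x : Fin N → ℝ) :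
    partialSum (truncate j x) k = partialSum x k := by
  unfold partialSum truncate
  refine sum_congr rfl fun i _ => ?_
  split_ifs <;> first | rfl | omega

theorem partialSum_reflect_of_le {j k : ℕ} (hk : k ≤ j) (x : Fin N → ℝ) :
    partialSum (reflect j x) k = partialSum x k := by
  rw [← partialSum_truncate hk, truncate_reflect, partialSum_truncate hk]

theorem partialSum_sub_partialSum {j k : ℕ} (hjk : j ≤ k) (x : Fin N → ℝ) :
    partialSum x k - partialSum x j =
      ∑ i : Fin N, if j ≤ (i : ℕ) ∧ (i : ℕ) < k then x i else 0 := by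
  unfold partialSum
  rw [← sum_sub_distrib]
  refine sum_congr rfl fun i _ => ?_
  split_ifs <;> first | omega | ring

theorem partialSum_reflect_of_ge {j k : ℕ} (hjk : j ≤ k) (hk : k ≤ N) (x : Fin N → ℝ) :
    partialSum (reflect j x) k = partialSum x j - partialSum x N + partialSum x (j + N - k) := by
  have h₁ := partialSum_sub_partialSum hjk (reflect j x)
  have h₂ := partialSum_sub_partialSum (show j + N - k ≤ N by omega) x
  rw [partialSum_reflect_of_le le_rfl] at h₁
  have key : (∑ i : Fin N, if j ≤ (i : ℕ) ∧ (i : ℕ) < k then reflect j x i else 0)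
      = -∑ i : Fin N, if j + N - k ≤ (i : ℕ) ∧ (i : ℕ) < N then x i else 0 := by
    let e := Function.Involutive.toPerm _ (reflectIndex_involutive (N := N) j)
    conv_rhs => rw [← Equiv.sum_comp e, ← sum_neg_distrib]
    refine sum_congr rfl fun i _ => ?_
    simp only [e, Function.Involutive.coe_toPerm, reflect, coe_reflectIndex]
    have := i.isLt
    split_ifs <;> first | omega | simp
  linarith

theorem partialSum_le_runningMax (x : Fin N → ℝ) {l k : ℕ} (hl : l ≤ k) :
    partialSum x l ≤ runningMax x k :=
  le_ciSup (f := fun l : Fin (k + 1) => partialSum x l) (Set.finite_range _).bddAbove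
    ⟨l, by omega⟩

theorem runningMax_le {x : Fin N → ℝ} {k : ℕ} {c : ℝ} (h : ∀ l ≤ k, partialSum x l ≤ c) :
    runningMax x k ≤ c :=
  ciSup_le fun l => h l (by omega)

theorem partialSum_le_tailMax (x : Fin N → ℝ) {j l : ℕ} (hjl : j ≤ l) (hl : l ≤ N) :
    partialSum x l ≤ tailMax x j :=
  le_ciSup_of_le (f := fun l : Fin (N - j + 1) => partialSum x (j + l))
    (Set.finite_range _).bddAbove ⟨l - j, by omega⟩ (by simp only [Nat.add_sub_cancel' hjl]; rfl)

theorem tailMax_le {x : Fin N → ℝ} {j : ℕ} {c : ℝ} (hj : j ≤ N)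
    (h : ∀ l, j ≤ l → l ≤ N → partialSum x l ≤ c) : tailMax x j ≤ c :=
  ciSup_le fun l => h _ (by omega) (by omega)

theorem runningMax_eq_max_tailMax (x : Fin N → ℝ) {j : ℕ} (hj : j ≤ N) :
    runningMax x N = max (runningMax x j) (tailMax x j) := by
  refine le_antisymm (runningMax_le fun l hl => ?_) (max_le ?_ ?_)
  · rcases le_total l j with hlj | hjl
    · exact le_max_of_le_left (partialSum_le_runningMax x hlj)
    · exact le_max_of_le_right (partialSum_le_tailMax x hjl hl)
  · exact runningMax_le fun l hl => partialSum_le_runningMax x (hl.trans hj)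
  · exact tailMax_le hj fun l _ hl => partialSum_le_runningMax x hl

theorem runningMax_reflect_of_le {j k : ℕ} (hk : k ≤ j) (x : Fin N → ℝ) :
    runningMax (reflect j x) k = runningMax x k := by
  unfold runningMax
  congr 1 with l
  exact partialSum_reflect_of_le (by omega) x

theorem tailMax_reflect {j : ℕ} (hj : j ≤ N) (x : Fin N → ℝ) :
    tailMax (reflect j x) j = partialSum x j - partialSum x N + tailMax x j := by
  refine le_antisymm (tailMax_le hj fun l hjl hl => ?_) ?_
  · rw [partialSum_reflect_of_ge hjl hl]
    gcongr
    exact partialSum_le_tailMax x (by omega) (by omega)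
  · rw [← le_sub_iff_add_le']
    refine tailMax_le hj fun l hjl hl => ?_
    have h := partialSum_reflect_of_ge (j := j) (k := j + N - l) (by omega) (by omega) x
    rw [show j + N - (j + N - l) = l by omega] at h
    rw [le_sub_iff_add_le', ← h]
    exact partialSum_le_tailMax _ (by omega) (by omega)

theorem measurable_partialSum (k : ℕ) : Measurable fun x : Fin N → ℝ => partialSum x k := by
  refine Finset.measurable_sum _ fun i _ => ?_
  split_ifs
  exacts [measurable_pi_apply i, measurable_const]

theorem measurable_runningMax (k : ℕ) : Measurable fun x : Fin N → ℝ => runningMax x k :=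
  Measurable.iSup fun l => measurable_partialSum l

noncomputable def shortfall (x : Fin N → ℝ) (k : ℕ) : ℝ := runningMax x N - partialSum x k

theorem shortfall_nonneg (x : Fin N → ℝ) {k : ℕ} (hk : k ≤ N) : 0 ≤ shortfall x k :=
  sub_nonneg.2 (partialSum_le_runningMax x hk)

theorem measurable_shortfall (k : ℕ) : Measurable fun x : Fin N → ℝ => shortfall x k :=
  (measurable_runningMax N).sub (measurable_partialSum k)

theorem map_shortfall_add_map_shortfall_reflect_le {f : ℝ → ℝ}
    (hf : ConvexOn ℝ (Set.Ici 0) f) {j : ℕ} (hj : j ≤ N) (x : Fin N → ℝ) :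
    f (shortfall x j) + f (shortfall (reflect j x) j) ≤
      f (shortfall x N) + f (shortfall (reflect j x) N) := by
  set d := runningMax x j - partialSum x j
  set m := tailMax x j - partialSum x j
  set s := partialSum x N - partialSum x j
  have h₁ : shortfall x j = max d m := by
    rw [shortfall, runningMax_eq_max_tailMax x hj, max_sub_sub_right]
  have h₂ : shortfall x N = max d m - s := by
    rw [← h₁, shortfall, shortfall]; ring
  have h₃ : shortfall (reflect j x) j = max d (m - s) := by
    rw [shortfall, runningMax_eq_max_tailMax _ hj, runningMax_reflect_of_le le_rfl,
      tailMax_reflect hj, partialSum_reflect_of_le le_rfl, ← max_sub_sub_right]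
    congr 1
    simp only [m, s]
    ring
  have h₄ : shortfall (reflect j x) N = max d (m - s) + s := by
    rw [← h₃, shortfall, shortfall, partialSum_reflect_of_ge hj le_rfl,
      partialSum_reflect_of_le le_rfl, Nat.add_sub_cancel]
    ring
  rw [h₁, h₂, h₃, h₄]
  exact hf.map_max_add_map_max_le (sub_nonneg.2 (partialSum_le_tailMax x le_rfl hj))
    (sub_le_sub_right (partialSum_le_tailMax x hj le_rfl) _)

theorem shortfall_reflect_of_runningMax_eq {j : ℕ} (hj : j ≤ N) {x : Fin N → ℝ}
    (hx : runningMax x j = partialSum x j) : shortfall (reflect j x) N = shortfall x j := by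
  rw [shortfall, shortfall, runningMax_eq_max_tailMax _ hj, runningMax_eq_max_tailMax _ hj,
    runningMax_reflect_of_le le_rfl, tailMax_reflect hj, partialSum_reflect_of_ge hj le_rfl,
    Nat.add_sub_cancel, hx, max_eq_right (partialSum_le_tailMax x le_rfl hj),
    max_eq_right (by linarith [partialSum_le_tailMax x hj le_rfl])]
  ring

theorem measurable_truncate (j : ℕ) : Measurable (truncate (N := N) j) :=
  measurable_pi_lambda _ fun i => by
    unfold truncate
    split_ifs
    exacts [measurable_pi_apply i, measurable_const]

theorem preimage_reflect_preimage_truncate (j : ℕ) (B : Set (Fin N → ℝ)) :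
    reflect j ⁻¹' (truncate j ⁻¹' B) = truncate j ⁻¹' B := by
  ext x
  simp only [Set.mem_preimage, truncate_reflect]

theorem measurePreserving_reflect {μ : Measure ℝ} [SigmaFinite μ]
    (hμ : MeasurePreserving Neg.neg μ μ) (j : ℕ) :
    MeasurePreserving (reflect j) (Measure.pi fun _ : Fin N => μ) (Measure.pi fun _ => μ) := by
  let e := Function.Involutive.toPerm _ (reflectIndex_involutive (N := N) j)
  have hperm := measurePreserving_arrowCongr' (fun _ => μ) (fun _ => μ) e.symm
    (MeasurableEquiv.refl ℝ) fun _ => MeasurePreserving.id μ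
  have hsign := measurePreserving_pi (fun _ : Fin N => μ) (fun _ => μ)
    (f := fun i => if (i : ℕ) < j then id else Neg.neg)
    fun i => by split_ifs; exacts [MeasurePreserving.id μ, hμ]
  convert hsign.comp hperm using 1
  ext x i
  simp only [MeasurableEquiv.arrowCongr', Equiv.arrowCongr', Function.Involutive.toPerm_symm,
    MeasurableEquiv.coe_mk, Function.comp_apply, Equiv.arrowCongr_apply, EquivLike.coe_coe,
    Function.Involutive.coe_toPerm, MeasurableEquiv.refl_apply, e, reflect]
  by_cases h : (i : ℕ) < j
  · simp only [h, if_true, id, reflectIndex, dif_pos]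
  · simp only [h, if_false]

theorem measurable_ofReal_sub_shortfall {f : ℝ → ℝ} (hf : AntitoneOn f (Set.Ici 0))
    {k : ℕ} (hk : k ≤ N) :
    Measurable fun x : Fin N → ℝ => ENNReal.ofReal (f 0 - f (shortfall x k)) :=
  (measurable_const.sub
    (hf.measurable_comp_of_nonneg (measurable_shortfall k) (shortfall_nonneg · hk))).ennreal_ofReal

section PathSpace

variable {μ : Measure ℝ} [SigmaFinite μ] {f : ℝ → ℝ} {j : ℕ} {B : Set (Fin N → ℝ)}

theorem setLIntegral_ofReal_sub_shortfall_le (hμ : MeasurePreserving Neg.neg μ μ)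
    (hmono : AntitoneOn f (Set.Ici 0)) (hconv : ConvexOn ℝ (Set.Ici 0) f) (hj : j ≤ N)
    (hB : MeasurableSet B) (hBj : reflect j ⁻¹' B = B) :
    ∫⁻ x in B, ENNReal.ofReal (f 0 - f (shortfall x N)) ∂Measure.pi (fun _ => μ) ≤
      ∫⁻ x in B, ENNReal.ofReal (f 0 - f (shortfall x j)) ∂Measure.pi (fun _ => μ) := by
  have hT := (measurePreserving_reflect hμ j).restrict_preimage hB
  rw [hBj] at hT
  have hf₀ : ∀ x k, k ≤ N → f (shortfall x k) ≤ f 0 := fun x k hk =>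
    hmono (le_refl (0 : ℝ)) (shortfall_nonneg x hk) (shortfall_nonneg x hk)
  refine lintegral_le_of_ae_add_comp_le hT (measurable_ofReal_sub_shortfall hmono le_rfl)
    (measurable_ofReal_sub_shortfall hmono hj) (ae_of_all _ fun x => ?_)
  exact ENNReal.ofReal_sub_add_ofReal_sub_le (hf₀ x N le_rfl) (hf₀ _ N le_rfl)
    (map_shortfall_add_map_shortfall_reflect_le hconv hj x)

theorem setLIntegral_ofReal_sub_shortfall_eq (hμ : MeasurePreserving Neg.neg μ μ)
    (hmono : AntitoneOn f (Set.Ici 0)) (hj : j ≤ N) (hB : MeasurableSet B)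
    (hBj : reflect j ⁻¹' B = B)
    (hB₀ : ∀ᵐ x ∂Measure.pi (fun _ => μ), x ∈ B → runningMax x j = partialSum x j) :
    ∫⁻ x in B, ENNReal.ofReal (f 0 - f (shortfall x N)) ∂Measure.pi (fun _ => μ) =
      ∫⁻ x in B, ENNReal.ofReal (f 0 - f (shortfall x j)) ∂Measure.pi (fun _ => μ) := by
  have hT := (measurePreserving_reflect hμ j).restrict_preimage hB
  rw [hBj] at hT
  rw [← hT.lintegral_comp (measurable_ofReal_sub_shortfall hmono le_rfl)]
  exact setLIntegral_congr_fun_ae hB (hB₀.mono fun x hx hxB => by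
    rw [shortfall_reflect_of_runningMax_eq hj (hx hxB)])

end PathSpace

section Walk

variable {Ω : Type*} [MeasurableSpace Ω] {P : Measure Ω} {vec : Ω → Fin N → ℝ}
  {μ : Measure ℝ} [SigmaFinite μ] {f : ℝ → ℝ} {j : ℕ} {A : Set Ω} {ρ : Ω → ℕ}

theorem setLIntegral_ofReal_sub_shortfall_comp_le
    (hvec : MeasurePreserving vec P (Measure.pi fun _ => μ)) (hμ : MeasurePreserving Neg.neg μ μ)
    (hmono : AntitoneOn f (Set.Ici 0)) (hconv : ConvexOn ℝ (Set.Ici 0) f) (hj : j ≤ N)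
    (hA : MeasurableSet[MeasurableSpace.comap (fun ω => truncate j (vec ω)) inferInstance] A) :
    ∫⁻ ω in A, ENNReal.ofReal (f 0 - f (shortfall (vec ω) N)) ∂P ≤
      ∫⁻ ω in A, ENNReal.ofReal (f 0 - f (shortfall (vec ω) j)) ∂P := by
  obtain ⟨B, hB, rfl⟩ := hA
  have hB' := measurable_truncate j hB
  change ∫⁻ ω in vec ⁻¹' (truncate j ⁻¹' B), _ ∂P ≤ ∫⁻ ω in vec ⁻¹' (truncate j ⁻¹' B), _ ∂P
  rw [hvec.setLIntegral_comp_preimage hB' (measurable_ofReal_sub_shortfall hmono le_rfl),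
    hvec.setLIntegral_comp_preimage hB' (measurable_ofReal_sub_shortfall hmono hj)]
  exact setLIntegral_ofReal_sub_shortfall_le hμ hmono hconv hj hB'
    (preimage_reflect_preimage_truncate j B)

theorem setLIntegral_ofReal_sub_shortfall_comp_eq
    (hvec : MeasurePreserving vec P (Measure.pi fun _ => μ)) (hμ : MeasurePreserving Neg.neg μ μ)
    (hmono : AntitoneOn f (Set.Ici 0)) (hj : j ≤ N)
    (hA : MeasurableSet[MeasurableSpace.comap (fun ω => truncate j (vec ω)) inferInstance] A)
    (hA₀ : ∀ᵐ ω ∂P, ω ∈ A → runningMax (vec ω) j = partialSum (vec ω) j) :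
    ∫⁻ ω in A, ENNReal.ofReal (f 0 - f (shortfall (vec ω) N)) ∂P =
      ∫⁻ ω in A, ENNReal.ofReal (f 0 - f (shortfall (vec ω) j)) ∂P := by
  obtain ⟨B, hB, rfl⟩ := hA
  have hB' := measurable_truncate j hB
  change ∫⁻ ω in vec ⁻¹' (truncate j ⁻¹' B), _ ∂P = ∫⁻ ω in vec ⁻¹' (truncate j ⁻¹' B), _ ∂P
  rw [hvec.setLIntegral_comp_preimage hB' (measurable_ofReal_sub_shortfall hmono le_rfl),
    hvec.setLIntegral_comp_preimage hB' (measurable_ofReal_sub_shortfall hmono hj)]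
  refine setLIntegral_ofReal_sub_shortfall_eq hμ hmono hj hB'
    (preimage_reflect_preimage_truncate j B) ?_
  rw [← hvec.map_eq]
  exact (ae_map_iff hvec.aemeasurable (hB'.imp
    (measurableSet_eq_fun (measurable_runningMax j) (measurable_partialSum j)))).2 hA₀

theorem lintegral_ofReal_sub_shortfall_le_stopped
    (hvec : MeasurePreserving vec P (Measure.pi fun _ => μ)) (hμ : MeasurePreserving Neg.neg μ μ)
    (hmono : AntitoneOn f (Set.Ici 0)) (hconv : ConvexOn ℝ (Set.Ici 0) f)
    (hρ : ∀ j ≤ N, MeasurableSet[MeasurableSpace.comap (fun ω => truncate j (vec ω)) inferInstance]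
      {ω | ρ ω = j})
    (hρN : ∀ ω, ρ ω ≤ N) :
    ∫⁻ ω, ENNReal.ofReal (f 0 - f (shortfall (vec ω) N)) ∂P ≤
      ∫⁻ ω, ENNReal.ofReal (f 0 - f (shortfall (vec ω) (ρ ω))) ∂P :=
  lintegral_comp_le_lintegral_comp_of_setLIntegral_le (fun j hj =>
    ((measurable_truncate j).comp hvec.measurable).comap_le _ (hρ j hj)) hρN
    fun j hj => setLIntegral_ofReal_sub_shortfall_comp_le hvec hμ hmono hconv hj (hρ j hj)

theorem lintegral_ofReal_sub_shortfall_eq_stopped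
    (hvec : MeasurePreserving vec P (Measure.pi fun _ => μ)) (hμ : MeasurePreserving Neg.neg μ μ)
    (hmono : AntitoneOn f (Set.Ici 0))
    (hρ : ∀ j ≤ N, MeasurableSet[MeasurableSpace.comap (fun ω => truncate j (vec ω)) inferInstance]
      {ω | ρ ω = j})
    (hρN : ∀ ω, ρ ω ≤ N)
    (hρ₀ : ∀ j < N, ∀ᵐ ω ∂P, ρ ω = j → runningMax (vec ω) j = partialSum (vec ω) j) :
    ∫⁻ ω, ENNReal.ofReal (f 0 - f (shortfall (vec ω) N)) ∂P =
      ∫⁻ ω, ENNReal.ofReal (f 0 - f (shortfall (vec ω) (ρ ω))) ∂P := by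
  have hρ' : ∀ j ≤ N, MeasurableSet {ω | ρ ω = j} := fun j hj =>
    ((measurable_truncate j).comp hvec.measurable).comap_le _ (hρ j hj)
  have hslice : ∀ j ≤ N, ∫⁻ ω in {ω | ρ ω = j}, ENNReal.ofReal (f 0 - f (shortfall (vec ω) N)) ∂P =
      ∫⁻ ω in {ω | ρ ω = j}, ENNReal.ofReal (f 0 - f (shortfall (vec ω) j)) ∂P := by
    intro j hj
    rcases hj.lt_or_eq with hjN | rfl
    · exact setLIntegral_ofReal_sub_shortfall_comp_eq hvec hμ hmono hj (hρ j hj) (hρ₀ j hjN)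
    · rfl
  exact le_antisymm
    (lintegral_comp_le_lintegral_comp_of_setLIntegral_le hρ' hρN fun j hj => (hslice j hj).le)
    (lintegral_comp_le_lintegral_comp_of_setLIntegral_le hρ' hρN fun j hj => (hslice j hj).ge)

end Walk

section Increments

variable {Ω : Type*}

def increments (ξ : ℕ → Ω → ℝ) (N : ℕ) (ω : Ω) (i : Fin N) : ℝ := ξ i ω

variable {ξ : ℕ → Ω → ℝ} {X M : ℕ → Ω → ℝ}

theorem partialSum_increments {k : ℕ} (hk : k ≤ N) (ω : Ω) :
    partialSum (increments ξ N ω) k = ∑ i ∈ range k, ξ i ω := by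
  simp only [partialSum, increments]
  rw [Fin.sum_univ_eq_sum_range (fun i => if i < k then ξ i ω else 0),
    ← sum_range_add_sum_Ico _ hk, sum_congr rfl fun i hi => if_pos (mem_range.1 hi),
    sum_eq_zero fun i hi => if_neg (not_lt.2 (mem_Ico.1 hi).1), add_zero]

theorem runningMax_increments (hX : ∀ n ω, X n ω = ∑ i ∈ range n, ξ i ω)
    (hM : ∀ n ω, M n ω = ⨆ k : Fin (n + 1), X k ω) {k : ℕ} (hk : k ≤ N) (ω : Ω) :
    runningMax (increments ξ N ω) k = M k ω := by
  rw [hM]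
  exact iSup_congr fun l => by rw [hX, partialSum_increments (by omega)]

variable [MeasurableSpace Ω] {P : Measure Ω}

theorem measurable_increments (hξ : ∀ i, Measurable (ξ i)) (N : ℕ) :
    Measurable (increments ξ N) :=
  measurable_pi_lambda _ fun i => hξ i

theorem measurePreserving_increments [IsProbabilityMeasure P] (hξ : ∀ i, Measurable (ξ i))
    (hindep : iIndepFun ξ P) (hid : ∀ i, P.map (ξ i) = P.map (ξ 0)) (N : ℕ) :
    MeasurePreserving (increments ξ N) P (Measure.pi fun _ => P.map (ξ 0)) where
  measurable := measurable_increments hξ N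
  map_eq := by
    rw [show increments ξ N = fun ω (i : Fin N) => ξ i ω from rfl,
      iIndepFun.map_fun_eq_pi_map (fun i : Fin N => (hξ i).aemeasurable)
      (hindep.precomp Fin.val_injective)]
    simp only [hid]

theorem measurableSet_comap_truncate_of_isStoppingTime
    (hX : ∀ n ω, X n ω = ∑ i ∈ range n, ξ i ω) (hXmeas : ∀ n, StronglyMeasurable (X n))
    {ρ : Ω → ℕ} (hρ : IsStoppingTime (Filtration.natural X hXmeas) fun ω => (ρ ω : WithTop ℕ))
    {j : ℕ} (hj : j ≤ N) :
    MeasurableSet[MeasurableSpace.comap (fun ω => truncate j (increments ξ N ω)) inferInstance]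
      {ω | ρ ω = j} := by
  have hle : Filtration.natural X hXmeas j ≤
      MeasurableSpace.comap (fun ω => truncate j (increments ξ N ω)) inferInstance := by
    refine iSup₂_le fun k hk => ?_
    have hXk : X k = (fun x => partialSum x k) ∘ fun ω => truncate j (increments ξ N ω) := by
      ext ω
      rw [Function.comp_apply, partialSum_truncate hk, hX, partialSum_increments (hk.trans hj)]
    rw [hXk, ← MeasurableSpace.comap_comp]
    exact MeasurableSpace.comap_mono (measurable_partialSum k).comap_le
  exact hle _ (by simpa using hρ.measurableSet_eq j)

theorem ae_runningMax_eq_partialSum_of_measure_eq_one [IsProbabilityMeasure P]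
    (hξ : ∀ i, Measurable (ξ i)) (hX : ∀ n ω, X n ω = ∑ i ∈ range n, ξ i ω)
    (hXmeas : ∀ n, StronglyMeasurable (X n)) (hM : ∀ n ω, M n ω = ⨆ k : Fin (n + 1), X k ω)
    {τ : Ω → ℕ} (hτ : IsStoppingTime (Filtration.natural X hXmeas) fun ω => (τ ω : WithTop ℕ))
    (hτgood : P {ω | X (τ ω) ω = M (τ ω) ω ∨ τ ω = N} = 1) {j : ℕ} (hj : j < N) :
    ∀ᵐ ω ∂P, τ ω = j → runningMax (increments ξ N ω) j = partialSum (increments ξ N ω) j := by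
  have hmeas : MeasurableSet
      {ω | τ ω = j → runningMax (increments ξ N ω) j = partialSum (increments ξ N ω) j} :=
    (Filtration.le _ j _ (by simpa using hτ.measurableSet_eq j)).imp (measurableSet_eq_fun
      ((measurable_runningMax j).comp (measurable_increments hξ N))
      ((measurable_partialSum j).comp (measurable_increments hξ N)))
  refine (mem_ae_iff_prob_eq_one hmeas).2 (le_antisymm prob_le_one ?_)
  rw [← hτgood]
  refine measure_mono fun ω hω hτj => ?_
  rcases hω with h | h
  · rw [runningMax_increments hX hM hj.le, partialSum_increments hj.le, ← hX, ← hτj]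
    exact h.symm
  · omega

end Increments

end RandomWalk

open RandomWalk

theorem randomWalk_symmetric_optimal_rules_general {Ω : Type*} [MeasurableSpace Ω]
    (P : Measure Ω) [IsProbabilityMeasure P]
    (ξ : ℕ → Ω → ℝ) (hξmeas : ∀ i, Measurable (ξ i))
    (hindep : iIndepFun ξ P)
    (hid : ∀ i, Measure.map (ξ i) P = Measure.map (ξ 0) P)
    (hsymm : Measure.map (ξ 0) P = Measure.map (fun ω => -ξ 0 ω) P)
    (X : ℕ → Ω → ℝ) (hX : ∀ n ω, X n ω = ∑ i ∈ range n, ξ i ω)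
    (hXmeas : ∀ n, StronglyMeasurable (X n))
    (M : ℕ → Ω → ℝ) (hM : ∀ n ω, M n ω = ⨆ k : Fin (n + 1), X k ω)
    (f : ℝ → ℝ) (hmono : AntitoneOn f (Set.Ici 0))
    (hconv : ConvexOn ℝ (Set.Ici 0) f)
    (N : ℕ) (τ : Ω → ℕ)
    (hτ : IsStoppingTime (Filtration.natural X hXmeas) (fun ω => (τ ω : WithTop ℕ)))
    (hτN : ∀ ω, τ ω ≤ N)
    (hτgood : P {ω | X (τ ω) ω = M (τ ω) ω ∨ τ ω = N} = 1) :
    ∀ σ : Ω → ℕ, IsStoppingTime (Filtration.natural X hXmeas) (fun ω => (σ ω : WithTop ℕ)) →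
      (∀ ω, σ ω ≤ N) →
      ∫⁻ ω, ENNReal.ofReal (f 0 - f (M N ω - X (σ ω) ω)) ∂P ≥
        ∫⁻ ω, ENNReal.ofReal (f 0 - f (M N ω - X (τ ω) ω)) ∂P := by
  intro σ hσ hσN
  have hvec := measurePreserving_increments hξmeas hindep hid N
  have hμ : MeasurePreserving Neg.neg (P.map (ξ 0)) (P.map (ξ 0)) :=
    ⟨measurable_neg, by rw [Measure.map_map measurable_neg (hξmeas 0), hsymm]; rfl⟩
  have hcost : ∀ ρ : Ω → ℕ, (∀ ω, ρ ω ≤ N) →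
      ∫⁻ ω, ENNReal.ofReal (f 0 - f (M N ω - X (ρ ω) ω)) ∂P =
        ∫⁻ ω, ENNReal.ofReal (f 0 - f (shortfall (increments ξ N ω) (ρ ω))) ∂P := fun ρ hρN =>
    lintegral_congr fun ω => by
      rw [shortfall, runningMax_increments hX hM le_rfl, partialSum_increments (hρN ω), hX]
  rw [ge_iff_le, hcost τ hτN, hcost σ hσN, ← lintegral_ofReal_sub_shortfall_eq_stopped hvec hμ
    hmono (fun j hj => measurableSet_comap_truncate_of_isStoppingTime hX hXmeas hτ hj) hτN
    fun j hj => ae_runningMax_eq_partialSum_of_measure_eq_one hξmeas hX hXmeas hM hτ hτgood hj]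
  exact lintegral_ofReal_sub_shortfall_le_stopped hvec hμ hmono hconv
    (fun j hj => measurableSet_comap_truncate_of_isStoppingTime hX hXmeas hσ hj) hσN

/-- Theorem 2.1(iii): for a random walk with i.i.d. symmetric steps and
`f : [0,∞) → ℝ` nonincreasing and convex, any stopping time `τ ≤ N` with
`P(X τ = M τ or τ = N) = 1` attains the supremum of `E[f(M N - X σ)]` over
all stopping times `σ ≤ N`: for every such `σ`,
`E[f(M N - X σ)] ≤ E[f(M N - X τ)]`.  Since `f ≤ f 0` on `[0,∞)`, the
inequality of expectations (possibly `-∞`) is expressed through the Lebesgue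
integrals of `f 0 - f (⋯) ≥ 0`. -/
theorem randomWalk_symmetric_optimal_rules {Ω : Type*} [MeasurableSpace Ω]
    (P : Measure Ω) [IsProbabilityMeasure P]
    (ξ : ℕ → Ω → ℝ) (hξmeas : ∀ i, Measurable (ξ i))
    (hindep : iIndepFun ξ P)
    (hid : ∀ i, Measure.map (ξ i) P = Measure.map (ξ 0) P)
    (hsymm : Measure.map (ξ 0) P = Measure.map (fun ω => -ξ 0 ω) P)
    (X : ℕ → Ω → ℝ) (hX : ∀ n ω, X n ω = ∑ i ∈ range n, ξ i ω)
    (hXmeas : ∀ n, StronglyMeasurable (X n))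
    (M : ℕ → Ω → ℝ) (hM : ∀ n ω, M n ω = ⨆ k : Fin (n + 1), X k ω)
    (f : ℝ → ℝ) (hmono : AntitoneOn f (Set.Ici 0))
    (hconv : ConvexOn ℝ (Set.Ici 0) f)
    (N : ℕ) (hN : 0 < N) (τ : Ω → ℕ)
    (hτ : IsStoppingTime (Filtration.natural X hXmeas) (fun ω => (τ ω : WithTop ℕ)))
    (hτN : ∀ ω, τ ω ≤ N)
    (hτgood : P {ω | X (τ ω) ω = M (τ ω) ω ∨ τ ω = N} = 1) :
    ∀ σ : Ω → ℕ, IsStoppingTime (Filtration.natural X hXmeas) (fun ω => (σ ω : WithTop ℕ)) →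
      (∀ ω, σ ω ≤ N) →
      ∫⁻ ω, ENNReal.ofReal (f 0 - f (M N ω - X (σ ω) ω)) ∂P ≥
        ∫⁻ ω, ENNReal.ofReal (f 0 - f (M N ω - X (τ ω) ω)) ∂P :=
  randomWalk_symmetric_optimal_rules_general P ξ hξmeas hindep hid hsymm X hX hXmeas M hM f hmono
    hconv N τ hτ hτN hτgood
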